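/- arXiv:2210.14787 — 4 statements merged into one kernel-verified Lean document; each statement's English description precedes it below -/
import Mathlib

section
/- Let k be a field of characteristic zero, A = k[X₀,X₁,X₂] the polynomial ring in three variables over k, I ⊆ A an ideal, R = A/I, and π : A → R the quotient map. Suppose τ̃ is a k-derivation of A with τ̃(I) ⊆ I, and let τ be the induced k-derivation of R (i.e. τ(π(a)) = π(τ̃(a)) for all a ∈ A). Assume that the map R → Der_k(R), r ↦ r·τ, is bijective, and that Der_k(R) is a simple Lie algebra over k. Then for every D ∈ Der_k(R) there exist f, g, h ∈ R such that D = ⁅τ, f·τ⁆ + ⁅π(X₁)·τ, g·τ⁆ + ⁅π(X₂)·τ, h·τ⁆. -/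
/-!
Write `R = A ⧸ I` and `xᵢ = π(Xᵢ)`. Since every derivation is `r • τ` and
`⁅a • τ, b • τ⁆ = (a τ(b) - b τ(a)) • τ`, each `τ`-stable ideal `J` of `R` gives a Lie ideal
`J • τ`, so simplicity forces the ideal generated by `τ(R)` to be all of `R`. By the chain rule
`τ(π F) = ∑ π(∂ᵢF) τ(xᵢ)` and the surjectivity of `∂/∂X₀` in characteristic zero, every product
`c τ(r)` lies in `W = τ(R) + (τ x₁, τ x₂)`; as `W` is additive, `W = R`. Finally the coefficient
of `⁅τ, f • τ⁆ + ⁅x₁ • τ, g • τ⁆ + ⁅x₂ • τ, h • τ⁆` is `τ(f + x₁ g + x₂ h) - 2 g τ(x₁) - 2 h τ(x₂)`,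
so `τ f₀ + a τ(x₁) + b τ(x₂)` is reached with `f = f₀ + x₁ a/2 + x₂ b/2`, `g = -a/2`, `h = -b/2`.
-/

open MvPolynomial

lemma AddSubmonoid.eq_top_of_forall_mul_mem_of_span_eq_top {R : Type*} [CommSemiring R]
    {s : Set R} (hs : Ideal.span s = ⊤) (W : AddSubmonoid R) (h : ∀ c, ∀ x ∈ s, c * x ∈ W) :
    W = ⊤ := by
  have key : ∀ x ∈ Ideal.span s, ∀ c, c * x ∈ W := by
    intro x hx
    induction hx using Submodule.span_induction with
    | mem x hx => exact fun c => h c x hx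
    | zero => simp [W.zero_mem]
    | add x y _ _ hx hy => exact fun c => mul_add c x y ▸ W.add_mem (hx c) (hy c)
    | smul a x _ hx => exact fun c => by rw [smul_eq_mul, ← mul_assoc]; exact hx (c * a)
  exact eq_top_iff.mpr fun c _ => by simpa using key 1 (hs ▸ Submodule.mem_top) c

lemma MvPolynomial.pderiv_surjective {σ k : Type*} [Field k] [CharZero k] (i : σ) :
    Function.Surjective (pderiv i : MvPolynomial σ k → MvPolynomial σ k) := by
  classical
  intro p
  induction p using MvPolynomial.induction_on' with
  | monomial u c =>
    refine ⟨monomial (u + Finsupp.single i 1) (c / (u i + 1)), ?_⟩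
    have hu : (u i : k) + 1 ≠ 0 := Nat.cast_add_one_ne_zero (u i)
    rw [pderiv_monomial, add_tsub_cancel_right]
    congr 1
    simp [field]
  | add p q hp hq =>
    obtain ⟨F, rfl⟩ := hp
    obtain ⟨G, rfl⟩ := hq
    exact ⟨F + G, map_add _ F G⟩

namespace Derivation

variable {k R : Type*} [CommRing k] [CommRing R] [Algebra k R]

lemma smul_lie_smul (τ : Derivation k R R) (a b : R) :
    ⁅a • τ, b • τ⁆ = (a * τ b - b * τ a) • τ := by
  ext r
  simp only [commutator_apply, smul_apply, smul_eq_mul, leibniz]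
  ring

def smulLieIdeal (τ : Derivation k R R) (hτ : Function.Surjective fun r : R => r • τ)
    (J : Ideal R) (hJ : ∀ r ∈ J, τ r ∈ J) : LieIdeal k (Derivation k R R) where
  toSubmodule :=
    (Submodule.map (LinearMap.toSpanSingleton R (Derivation k R R) τ) J).restrictScalars k
  lie_mem := by
    rintro x _ ⟨v, hv, rfl⟩
    obtain ⟨c, rfl⟩ := hτ x
    refine ⟨c * τ v - v * τ c, J.sub_mem (J.mul_mem_left c (hJ v hv)) (J.mul_mem_right _ hv), ?_⟩
    exact (smul_lie_smul τ c v).symm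

lemma mem_smulLieIdeal {τ : Derivation k R R} {hτ : Function.Surjective fun r : R => r • τ}
    {J : Ideal R} {hJ : ∀ r ∈ J, τ r ∈ J} {x : Derivation k R R} :
    x ∈ smulLieIdeal τ hτ J hJ ↔ ∃ r ∈ J, r • τ = x :=
  Iff.rfl

lemma eq_bot_or_eq_top_of_isSimple (τ : Derivation k R R)
    (hτ : Function.Bijective fun r : R => r • τ)
    (hsimple : LieAlgebra.IsSimple k (Derivation k R R)) (J : Ideal R)
    (hJ : ∀ r ∈ J, τ r ∈ J) : J = ⊥ ∨ J = ⊤ := by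
  rcases hsimple.eq_bot_or_eq_top (smulLieIdeal τ hτ.2 J hJ) with hbot | htop
  · left
    refine J.eq_bot_iff.mpr fun r hr => hτ.1 ?_
    have : r • τ ∈ smulLieIdeal τ hτ.2 J hJ := mem_smulLieIdeal.mpr ⟨r, hr, rfl⟩
    simpa [hbot] using this
  · right
    have : τ ∈ smulLieIdeal τ hτ.2 J hJ := htop ▸ LieSubmodule.mem_top τ
    obtain ⟨r, hr, hrτ⟩ := mem_smulLieIdeal.mp this
    obtain rfl : r = 1 := hτ.1 (by simpa using hrτ)
    exact J.eq_top_of_isUnit_mem hr isUnit_one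

lemma span_range_eq_top (τ : Derivation k R R) (hτ : Function.Bijective fun r : R => r • τ)
    (hsimple : LieAlgebra.IsSimple k (Derivation k R R)) : Ideal.span (Set.range ⇑τ) = ⊤ := by
  refine (eq_bot_or_eq_top_of_isSimple τ hτ hsimple _
    fun r _ => Ideal.subset_span (Set.mem_range_self r)).resolve_left fun hbot => ?_
  have hτ0 : τ = 0 := by
    ext r
    exact Ideal.span_eq_bot.mp hbot _ (Set.mem_range_self r)
  obtain ⟨x, y, hxy⟩ := (hsimple.nontrivial k (L := Derivation k R R)).exists_pair_ne
  obtain ⟨a, rfl⟩ := hτ.2 x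
  obtain ⟨b, rfl⟩ := hτ.2 y
  simp [hτ0] at hxy

lemma exists_smul_eq_lie_add_lie_add_lie (τ : Derivation k R R) (h2 : IsUnit (2 : R))
    (x₁ x₂ : R) {d : R}
    (hd : d ∈ LinearMap.range (τ : R →ₗ[k] R) ⊔ (Ideal.span {τ x₁, τ x₂}).restrictScalars k) :
    ∃ f g h : R, d • τ = ⁅τ, f • τ⁆ + ⁅x₁ • τ, g • τ⁆ + ⁅x₂ • τ, h • τ⁆ := by
  obtain ⟨_, ⟨f₀, rfl⟩, _, hj, rfl⟩ := Submodule.mem_sup.mp hd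
  obtain ⟨a, b, rfl⟩ := Ideal.mem_span_pair.mp hj
  obtain ⟨u, hu⟩ := h2.exists_right_inv
  set f := f₀ + x₁ * (u * a) + x₂ * (u * b)
  refine ⟨f, -(u * a), -(u * b), ?_⟩
  have lie_smul_self : ⁅τ, f • τ⁆ = τ f • τ := by simp
  rw [lie_smul_self, smul_lie_smul, smul_lie_smul, ← add_smul, ← add_smul]
  congr 1
  simp only [f, map_add, map_neg, leibniz, smul_eq_mul]
  linear_combination (-(a * τ x₁) - b * τ x₂) * hu

lemma apply_algHom_eq_sum (τ : Derivation k R R) {σ : Type*} [Fintype σ]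
    (φ : MvPolynomial σ k →ₐ[k] R) (p : MvPolynomial σ k) : τ (φ p) = ∑ i, φ (pderiv i p) * τ (φ (X i)) := by
  classical
  induction p using MvPolynomial.induction_on with
  | C a => simp
  | add p q hp hq => simp [hp, hq, add_mul, Finset.sum_add_distrib]
  | mul_X p j hp =>
    simp [hp, pderiv_X, Pi.single_apply, add_mul, Finset.sum_add_distrib, Finset.mul_sum,
      apply_ite φ, mul_assoc]

end Derivation

lemma Derivation.mul_apply_mem_of_surjective {k R : Type*} [Field k] [CharZero k] [CommRing R]
    [Algebra k R] (τ : Derivation k R R) {σ : Type*} [Fintype σ] (φ : MvPolynomial σ k →ₐ[k] R)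
    (hφ : Function.Surjective φ) (i : σ) (W : Submodule k R)
    (hτW : LinearMap.range (τ : R →ₗ[k] R) ≤ W) (hW : ∀ c, ∀ j ≠ i, c * τ (φ (X j)) ∈ W)
    (c r : R) : c * τ r ∈ W := by
  classical
  have mul_apply_X_mem (c : R) (j : σ) : c * τ (φ (X j)) ∈ W := by
    rcases eq_or_ne j i with rfl | hj
    · obtain ⟨H, rfl⟩ := hφ c
      obtain ⟨F, rfl⟩ := pderiv_surjective j H
      have chain := τ.apply_algHom_eq_sum φ F
      rw [← Finset.add_sum_erase _ _ (Finset.mem_univ j)] at chain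
      rw [eq_sub_of_add_eq chain.symm]
      exact W.sub_mem (hτW ⟨_, rfl⟩)
        (W.sum_mem fun l hl => hW _ l (Finset.ne_of_mem_erase hl))
    · exact hW c j hj
  obtain ⟨F, rfl⟩ := hφ r
  rw [τ.apply_algHom_eq_sum, Finset.mul_sum]
  exact W.sum_mem fun j _ => mul_assoc c _ _ ▸ mul_apply_X_mem _ j

theorem stmt_1_general (k : Type*) [Field k] [CharZero k]
    (I : Ideal (MvPolynomial (Fin 3) k))
    (τ : Derivation k (MvPolynomial (Fin 3) k ⧸ I) (MvPolynomial (Fin 3) k ⧸ I))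
    (hbij : Function.Bijective
      (fun r : MvPolynomial (Fin 3) k ⧸ I => r • τ))
    (hsimple : LieAlgebra.IsSimple k
      (Derivation k (MvPolynomial (Fin 3) k ⧸ I) (MvPolynomial (Fin 3) k ⧸ I)))
    (D : Derivation k (MvPolynomial (Fin 3) k ⧸ I) (MvPolynomial (Fin 3) k ⧸ I)) :
    ∃ f g h : MvPolynomial (Fin 3) k ⧸ I,
      D = ⁅τ, f • τ⁆ + ⁅(Ideal.Quotient.mk I (MvPolynomial.X 1)) • τ, g • τ⁆
        + ⁅(Ideal.Quotient.mk I (MvPolynomial.X 2)) • τ, h • τ⁆ := by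
  set x : Fin 3 → MvPolynomial (Fin 3) k ⧸ I := fun i => Ideal.Quotient.mk I (X i)
  let W := LinearMap.range (τ : MvPolynomial (Fin 3) k ⧸ I →ₗ[k] _) ⊔
    (Ideal.span {τ (x 1), τ (x 2)}).restrictScalars k
  have hW : W.toAddSubmonoid = ⊤ := by
    refine AddSubmonoid.eq_top_of_forall_mul_mem_of_span_eq_top
      (τ.span_range_eq_top hbij hsimple) _ ?_
    rintro c _ ⟨r, rfl⟩
    refine τ.mul_apply_mem_of_surjective (Ideal.Quotient.mkₐ k I)
      (Ideal.Quotient.mkₐ_surjective k I) 0 W le_sup_left (fun c j hj => ?_) c r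
    refine Submodule.mem_sup_right (Ideal.mul_mem_left _ c (Ideal.subset_span ?_))
    fin_cases j <;> simp [x] at hj ⊢
  have h2 : IsUnit (2 : MvPolynomial (Fin 3) k ⧸ I) := by
    simpa only [map_ofNat] using
      (two_ne_zero' k).isUnit.map (algebraMap k (MvPolynomial (Fin 3) k ⧸ I))
  obtain ⟨d, rfl⟩ := hbij.2 D
  exact τ.exists_smul_eq_lie_add_lie_add_lie h2 (x 1) (x 2)
    (show d ∈ W.toAddSubmonoid from hW ▸ AddSubmonoid.mem_top d)

/-- Explicit three-bracket decomposition from the proof of Theorem A. -/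
theorem stmt_1 (k : Type*) [Field k] [CharZero k]
    (I : Ideal (MvPolynomial (Fin 3) k))
    (τ' : Derivation k (MvPolynomial (Fin 3) k) (MvPolynomial (Fin 3) k))
    (hτ' : ∀ a ∈ I, τ' a ∈ I)
    (τ : Derivation k (MvPolynomial (Fin 3) k ⧸ I) (MvPolynomial (Fin 3) k ⧸ I))
    (hτ : ∀ a : MvPolynomial (Fin 3) k,
      τ (Ideal.Quotient.mk I a) = Ideal.Quotient.mk I (τ' a))
    (hbij : Function.Bijective
      (fun r : MvPolynomial (Fin 3) k ⧸ I => r • τ))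
    (hsimple : LieAlgebra.IsSimple k
      (Derivation k (MvPolynomial (Fin 3) k ⧸ I) (MvPolynomial (Fin 3) k ⧸ I)))
    (D : Derivation k (MvPolynomial (Fin 3) k ⧸ I) (MvPolynomial (Fin 3) k ⧸ I)) :
    ∃ f g h : MvPolynomial (Fin 3) k ⧸ I,
      D = ⁅τ, f • τ⁆ + ⁅(Ideal.Quotient.mk I (MvPolynomial.X 1)) • τ, g • τ⁆
        + ⁅(Ideal.Quotient.mk I (MvPolynomial.X 2)) • τ, h • τ⁆ :=
  stmt_1_general k I τ hbij hsimple D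
end

section
/- Let k be a field of characteristic zero, A = k[X₀,X₁] the polynomial ring in two variables over k, I ⊆ A an ideal, R = A/I, and π : A → R the quotient map. Suppose τ̃ is a k-derivation of A with τ̃(I) ⊆ I, and let τ be the induced k-derivation of R. Assume that the map R → Der_k(R), r ↦ r·τ, is bijective, that Der_k(R) is a simple Lie algebra over k, and that there exists D₀ ∈ Der_k(R) which is not a single Lie bracket (i.e. there are no D₁, D₂ ∈ Der_k(R) with D₀ = ⁅D₁,D₂⁆). Then the bracket width of Der_k(R) equals two: every D ∈ Der_k(R) can be written as D = ⁅D₁,D₂⁆ + ⁅D₃,D₄⁆ for some D₁, D₂, D₃, D₄ ∈ Der_k(R), but not every element of Der_k(R) is a single Lie bracket. -/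
set_option synthInstance.maxHeartbeats 1000000
set_option maxHeartbeats 2000000

open MvPolynomial

section Aux

variable {k : Type*} [Field k] {R : Type*} [CommRing R] [Algebra k R]

/-- The bracket of two multiples of a derivation `τ`. -/
lemma DKR_brack (τ : Derivation k R R) (a b : R) :
    ⁅a • τ, b • τ⁆ = (a * τ b - b * τ a) • τ := by
  ext s
  simp only [Derivation.commutator_apply, Derivation.smul_apply, smul_eq_mul,
    Derivation.leibniz]
  ring

/-- The `k`-linear map `r ↦ r • τ`. -/
noncomputable def DKR_phi (τ : Derivation k R R) : R →ₗ[k] Derivation k R R where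
  toFun r := r • τ
  map_add' a b := add_smul a b τ
  map_smul' c r := smul_assoc c r τ

/-- If `Der_k(R)` is simple and free of rank one on `τ`, and the image of `τ` is contained in
the ideal generated by `τ x0, τ x1`, then that ideal contains `1`. -/
lemma DKR_one_mem_aux (τ : Derivation k R R) (x0 x1 : R)
    (hbij : Function.Bijective (fun r : R => r • τ))
    (hsimple : LieAlgebra.IsSimple k (Derivation k R R))
    (hchain : ∀ s : R, ∃ a b : R, τ s = a * τ x0 + b * τ x1) :
    ∃ u v : R, u * τ x0 + v * τ x1 = 1 := by
  set J : Ideal R := Ideal.span {τ x0, τ x1} with hJ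
  have himτ : ∀ s : R, τ s ∈ J := by
    intro s
    obtain ⟨a, b, hab⟩ := hchain s
    rw [hab]
    exact J.add_mem (J.mul_mem_left _ (Ideal.subset_span (by simp)))
      (J.mul_mem_left _ (Ideal.subset_span (by simp)))
  set S : LieIdeal k (Derivation k R R) :=
    { Submodule.map (DKR_phi τ) (J.restrictScalars k) with
      lie_mem := by
        rintro x m hm
        obtain ⟨j, hjJ, rfl⟩ := hm
        obtain ⟨e, rfl⟩ := hbij.2 x
        show ⁅e • τ, j • τ⁆ ∈ Submodule.map (DKR_phi τ) (J.restrictScalars k)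
        rw [DKR_brack]
        exact ⟨e * τ j - j * τ e,
          J.sub_mem (J.mul_mem_left _ (himτ j)) (Ideal.mul_mem_right _ _ hjJ), rfl⟩ } with hS
  have hmem : ∀ D : Derivation k R R, D ∈ S ↔ ∃ j ∈ J, j • τ = D := fun D => Iff.rfl
  rcases hsimple.eq_bot_or_eq_top S with hbot | htop
  · exfalso
    have hτ0 : τ = 0 := by
      ext s
      have h1 : τ s • τ ∈ S := (hmem _).2 ⟨τ s, himτ s, rfl⟩
      rw [hbot] at h1
      have h2 : τ s • τ = 0 := h1
      have h3 : τ s = (0 : R) := hbij.1 (by simpa using h2)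
      simp [h3]
    have : IsLieAbelian (Derivation k R R) := by
      constructor
      intro x y
      obtain ⟨a, rfl⟩ := hbij.2 x
      obtain ⟨b, rfl⟩ := hbij.2 y
      rw [DKR_brack, hτ0]
      simp
    exact hsimple.non_abelian this
  · have hτS : τ ∈ S := htop ▸ LieSubmodule.mem_top τ
    obtain ⟨j, hjJ, hj⟩ := (hmem τ).1 hτS
    have hj1 : j = 1 := hbij.1 (by simpa using hj)
    rw [hj1] at hjJ
    exact Ideal.mem_span_pair.1 hjJ

end Aux

section Poly

variable {k : Type*} [Field k] [CharZero k]

/-- Chain rule for derivations of `k[X₀, X₁]`. -/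
lemma DKR_chain_rule (D : Derivation k (MvPolynomial (Fin 2) k) (MvPolynomial (Fin 2) k))
    (p : MvPolynomial (Fin 2) k) :
    D p = pderiv 0 p * D (X 0) + pderiv 1 p * D (X 1) := by
  have h : D = (D (X 0)) • pderiv 0 + (D (X 1)) • pderiv 1 := by
    apply MvPolynomial.derivation_ext
    intro i
    fin_cases i <;>
      simp [pderiv_X_self,
        pderiv_X_of_ne (show (1 : Fin 2) ≠ 0 by decide),
        pderiv_X_of_ne (show (0 : Fin 2) ≠ 1 by decide), smul_eq_mul]
  conv_lhs => rw [h]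
  simp [Derivation.add_apply, Derivation.smul_apply, smul_eq_mul, mul_comm]

/-- A formal antiderivative with respect to `X 0` (characteristic zero). -/
noncomputable def DKR_antider (U : MvPolynomial (Fin 2) k) : MvPolynomial (Fin 2) k :=
  U.support.sum fun m => monomial (m + Finsupp.single 0 1) (U.coeff m / ((m 0 : k) + 1))

lemma DKR_pderiv_antider (U : MvPolynomial (Fin 2) k) : pderiv 0 (DKR_antider U) = U := by
  rw [DKR_antider, map_sum]
  have h : ∀ m ∈ U.support,
      pderiv 0 (monomial (m + Finsupp.single 0 1) (U.coeff m / ((m 0 : k) + 1)))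
        = monomial m (U.coeff m) := by
    intro m _
    rw [pderiv_monomial, add_tsub_cancel_right]
    congr 1
    rw [Finsupp.add_apply, Finsupp.single_eq_same]
    push_cast
    have hne : (m 0 : k) + 1 ≠ 0 := Nat.cast_add_one_ne_zero (m 0)
    field_simp
  rw [Finset.sum_congr rfl h, support_sum_monomial_coeff]

end Poly

/-- Corollary 1: the bracket width of `Der_k(R)` equals two, given an element which is
not a single bracket. -/
theorem stmt_4 (k : Type*) [Field k] [CharZero k]
    (I : Ideal (MvPolynomial (Fin 2) k))
    (τ' : Derivation k (MvPolynomial (Fin 2) k) (MvPolynomial (Fin 2) k))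
    (hτ' : ∀ a ∈ I, τ' a ∈ I)
    (τ : Derivation k (MvPolynomial (Fin 2) k ⧸ I) (MvPolynomial (Fin 2) k ⧸ I))
    (hτ : ∀ a : MvPolynomial (Fin 2) k,
      τ (Ideal.Quotient.mk I a) = Ideal.Quotient.mk I (τ' a))
    (hbij : Function.Bijective
      (fun r : MvPolynomial (Fin 2) k ⧸ I => r • τ))
    (hsimple : LieAlgebra.IsSimple k
      (Derivation k (MvPolynomial (Fin 2) k ⧸ I) (MvPolynomial (Fin 2) k ⧸ I)))
    (hnot : ∃ D₀ : Derivation k (MvPolynomial (Fin 2) k ⧸ I) (MvPolynomial (Fin 2) k ⧸ I),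
      ¬ ∃ D₁ D₂ : Derivation k (MvPolynomial (Fin 2) k ⧸ I) (MvPolynomial (Fin 2) k ⧸ I),
        D₀ = ⁅D₁, D₂⁆) :
    (∀ D : Derivation k (MvPolynomial (Fin 2) k ⧸ I) (MvPolynomial (Fin 2) k ⧸ I),
      ∃ D₁ D₂ D₃ D₄ :
          Derivation k (MvPolynomial (Fin 2) k ⧸ I) (MvPolynomial (Fin 2) k ⧸ I),
        D = ⁅D₁, D₂⁆ + ⁅D₃, D₄⁆) ∧
    ¬ (∀ D : Derivation k (MvPolynomial (Fin 2) k ⧸ I) (MvPolynomial (Fin 2) k ⧸ I),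
      ∃ D₁ D₂ : Derivation k (MvPolynomial (Fin 2) k ⧸ I) (MvPolynomial (Fin 2) k ⧸ I),
        D = ⁅D₁, D₂⁆) := by
  constructor
  · intro D
    set π := Ideal.Quotient.mk I with hπ
    set x0 : MvPolynomial (Fin 2) k ⧸ I := π (X 0) with hx0
    set x1 : MvPolynomial (Fin 2) k ⧸ I := π (X 1) with hx1
    -- chain rule on the quotient
    have hchain : ∀ s : MvPolynomial (Fin 2) k ⧸ I,
        ∃ a b : MvPolynomial (Fin 2) k ⧸ I, τ s = a * τ x0 + b * τ x1 := by
      intro s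
      obtain ⟨F, hF⟩ := Ideal.Quotient.mk_surjective s
      refine ⟨π (pderiv 0 F), π (pderiv 1 F), ?_⟩
      rw [← hF, hτ, DKR_chain_rule τ' F, map_add, map_mul, map_mul, ← hτ, ← hτ]
    obtain ⟨u, v, huv⟩ := DKR_one_mem_aux τ x0 x1 hbij hsimple hchain
    obtain ⟨r, hr⟩ := hbij.2 D
    -- write r*u = π U and integrate U with respect to X 0
    obtain ⟨U, hU⟩ := Ideal.Quotient.mk_surjective (r * u)
    set P : MvPolynomial (Fin 2) k := DKR_antider U with hP
    set c : MvPolynomial (Fin 2) k ⧸ I := π P with hc'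
    have hc : τ c = r * u * τ x0 + π (pderiv 1 P) * τ x1 := by
      rw [hc', hτ, DKR_chain_rule τ' P, DKR_pderiv_antider, map_add, map_mul, map_mul, hU,
        ← hτ, ← hτ]
    set w : MvPolynomial (Fin 2) k ⧸ I := r * v - π (pderiv 1 P) with hw'
    have hw : w * τ x1 + τ c = r := by
      rw [hc, hw']
      linear_combination r * huv
    set h2 : MvPolynomial (Fin 2) k ⧸ I := algebraMap k _ (2⁻¹ : k) with hh2
    have hh : h2 + h2 = 1 := by
      rw [hh2, ← map_add, show (2⁻¹ + 2⁻¹ : k) = 1 by norm_num, map_one]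
    set e : MvPolynomial (Fin 2) k ⧸ I := c + h2 * (w * x1) with he'
    refine ⟨(h2 * w) • τ, x1 • τ, (1 : MvPolynomial (Fin 2) k ⧸ I) • τ, e • τ, ?_⟩
    have t1 : τ (h2 * w) = h2 * τ w := by
      rw [Derivation.leibniz]
      simp only [smul_eq_mul, hh2, Derivation.map_algebraMap, mul_zero, add_zero]
    have t2 : τ e = τ c + h2 * (w * τ x1 + x1 * τ w) := by
      rw [he', map_add, Derivation.leibniz, Derivation.leibniz]
      simp only [smul_eq_mul, hh2, Derivation.map_algebraMap, mul_zero, add_zero]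
    have key : (h2 * w) * τ x1 - x1 * τ (h2 * w)
        + ((1 : MvPolynomial (Fin 2) k ⧸ I) * τ e - e * τ 1) = r := by
      rw [t1, t2, τ.map_one_eq_zero]
      linear_combination hw + w * τ x1 * hh
    calc D = r • τ := hr.symm
    _ = ((h2 * w) * τ x1 - x1 * τ (h2 * w)
          + ((1 : MvPolynomial (Fin 2) k ⧸ I) * τ e - e * τ 1)) • τ := by rw [key]
    _ = ((h2 * w) * τ x1 - x1 * τ (h2 * w)) • τ
          + ((1 : MvPolynomial (Fin 2) k ⧸ I) * τ e - e * τ 1) • τ := add_smul _ _ _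
    _ = ⁅(h2 * w) • τ, x1 • τ⁆ + ⁅(1 : MvPolynomial (Fin 2) k ⧸ I) • τ, e • τ⁆ :=
        congrArg₂ (· + ·) (DKR_brack τ _ _).symm (DKR_brack τ _ _).symm
  · intro h
    obtain ⟨D₀, hD₀⟩ := hnot
    exact hD₀ (h D₀)
end

section
/- Let k be a field, R a finitely generated k-algebra which is an integral domain, K its field of fractions with embedding ι : R → K, and τ a k-derivation of K. Define V(R) = { a ∈ K : for all r ∈ R, (a·τ)(ι(r)) ∈ ι(R) }. Let f ∈ R be nonzero, let R_f ⊆ K be the k-subalgebra of K generated by ι(R) and ι(f)⁻¹, and define V(R_f) = { a ∈ K : (a·τ)(R_f) ⊆ R_f }. Let n ≥ 1 and suppose that for every a ∈ V(R) there exist a₁, …, a_n, b₁, …, b_n ∈ V(R) with a·τ = Σ_{i=1}^n ⁅a_i·τ, b_i·τ⁆ (an equality of k-derivations of K). Then for every h ∈ V(R_f) there exist c₁, …, c_n, d₁, …, d_n ∈ V(R_f) with h·τ = Σ_{i=1}^n ⁅c_i·τ, d_i·τ⁆. -/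
set_option synthInstance.maxHeartbeats 1000000
set_option maxHeartbeats 2000000

/-- Bracket of two rescalings of a derivation. -/
theorem stmt5_brk {k K : Type*} [Field k] [Field K] [Algebra k K]
    (τ : Derivation k K K) (a b : K) :
    ⁅a • τ, b • τ⁆ = (a * τ b - b * τ a) • τ := by
  ext x
  simp only [Derivation.commutator_apply, Derivation.smul_apply, smul_eq_mul,
    Derivation.leibniz]
  ring

theorem stmt5_brk_smul {k K : Type*} [Field k] [Field K] [Algebra k K]
    (τ : Derivation k K K) (c a b : K) :
    ⁅(c * a) • τ, (c * b) • τ⁆ = (c * c) • ⁅a • τ, b • τ⁆ := by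
  rw [stmt5_brk, stmt5_brk, smul_smul]
  congr 1
  simp only [Derivation.leibniz, smul_eq_mul]
  ring

/-- Theorem B: the bracket width of `Vec(C_f)` is at most the bracket width of
`Vec(C)`, realized inside `Der_k(K)` as `V(R)·τ` and `V(R_f)·τ`. -/
theorem stmt_5 (k R K : Type*) [Field k] [CommRing R] [IsDomain R] [Algebra k R]
    [Algebra.FiniteType k R] [Field K] [Algebra R K] [IsFractionRing R K]
    [Algebra k K] [IsScalarTower k R K]
    (τ : Derivation k K K)
    (VR : Set K)
    (hVR : VR = {a : K | ∀ r : R,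
      (a • τ) (algebraMap R K r) ∈ Set.range (algebraMap R K)})
    (f : R) (hf : f ≠ 0)
    (Rf : Subalgebra k K)
    (hRf : Rf = Algebra.adjoin k
      (Set.range (algebraMap R K) ∪ {(algebraMap R K f)⁻¹}))
    (VRf : Set K)
    (hVRf : VRf = {a : K | ∀ x ∈ Rf, (a • τ) x ∈ Rf})
    (n : ℕ) (hn : 1 ≤ n)
    (hwidth : ∀ a ∈ VR, ∃ as bs : Fin n → K,
      (∀ i, as i ∈ VR) ∧ (∀ i, bs i ∈ VR) ∧
      a • τ = ∑ i, ⁅as i • τ, bs i • τ⁆) :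
    ∀ h ∈ VRf, ∃ cs ds : Fin n → K,
      (∀ i, cs i ∈ VRf) ∧ (∀ i, ds i ∈ VRf) ∧
      h • τ = ∑ i, ⁅cs i • τ, ds i • τ⁆ := by
  subst hVR hVRf
  intro h hh
  simp only [Set.mem_setOf_eq] at hh
  set ι : R →+* K := algebraMap R K with hι
  have hιinj : Function.Injective ι := IsFractionRing.injective R K
  have hιf : ι f ≠ 0 := by
    intro h0
    exact hf (hιinj (by simpa using h0))
  -- range ι is closed under the operations we need
  have hradd : ∀ x y : K, x ∈ Set.range ι → y ∈ Set.range ι → x + y ∈ Set.range ι := by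
    rintro _ _ ⟨r, rfl⟩ ⟨r', rfl⟩; exact ⟨r + r', map_add ι r r'⟩
  have hrmul : ∀ x y : K, x ∈ Set.range ι → y ∈ Set.range ι → x * y ∈ Set.range ι := by
    rintro _ _ ⟨r, rfl⟩ ⟨r', rfl⟩; exact ⟨r * r', map_mul ι r r'⟩
  have hrpow : ∀ (j : ℕ) (y : K), y ∈ Set.range ι → (ι f) ^ j * y ∈ Set.range ι := by
    rintro j _ ⟨r, rfl⟩; exact ⟨f ^ j * r, by rw [map_mul, map_pow]⟩
  have hmono : ∀ (m m' : ℕ) (y : K), m ≤ m' → (ι f) ^ m * y ∈ Set.range ι →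
      (ι f) ^ m' * y ∈ Set.range ι := by
    intro m m' y hle hy
    obtain ⟨j, rfl⟩ := Nat.exists_eq_add_of_le hle
    rw [pow_add, mul_comm ((ι f) ^ m), mul_assoc]
    exact hrpow j _ hy
  -- every element of Rf becomes integral after clearing denominators
  have claim1 : ∀ x ∈ Rf, ∃ m : ℕ, (ι f) ^ m * x ∈ Set.range ι := by
    rw [hRf]
    intro x hx
    induction hx using Algebra.adjoin_induction with
    | mem y hy =>
      rcases hy with hy | hy
      · exact ⟨0, by simpa using hy⟩
      · refine ⟨1, ?_⟩
        rcases hy with rfl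
        rw [pow_one, mul_inv_cancel₀ hιf]
        exact ⟨1, map_one ι⟩
    | algebraMap c =>
      exact ⟨0, by simpa using ⟨algebraMap k R c,
        (IsScalarTower.algebraMap_apply k R K c).symm⟩⟩
    | add x y hx hy ihx ihy =>
      obtain ⟨m1, h1⟩ := ihx; obtain ⟨m2, h2⟩ := ihy
      refine ⟨max m1 m2, ?_⟩
      rw [mul_add]
      exact hradd _ _ (hmono m1 _ x (le_max_left _ _) h1)
        (hmono m2 _ y (le_max_right _ _) h2)
    | mul x y hx hy ihx ihy =>
      obtain ⟨m1, h1⟩ := ihx; obtain ⟨m2, h2⟩ := ihy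
      refine ⟨m1 + m2, ?_⟩
      have heq : (ι f) ^ (m1 + m2) * (x * y) = ((ι f) ^ m1 * x) * ((ι f) ^ m2 * y) := by
        rw [pow_add]; ring
      rw [heq]
      exact hrmul _ _ h1 h2
  have hιRf : ∀ r : R, ι r ∈ Rf := by
    intro r; rw [hRf]; exact Algebra.subset_adjoin (Or.inl ⟨r, rfl⟩)
  have hfinvRf : (ι f)⁻¹ ∈ Rf := by
    rw [hRf]; exact Algebra.subset_adjoin (Or.inr rfl)
  -- clear denominators uniformly on a finite generating set of R
  obtain ⟨s, hs⟩ := ‹Algebra.FiniteType k R›.out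
  have hgen : ∀ x : R, ∃ m, (ι f) ^ m * (h * τ (ι x)) ∈ Set.range ι := by
    intro x
    have hx := hh (ι x) (hιRf x)
    rw [Derivation.smul_apply, smul_eq_mul] at hx
    exact claim1 _ hx
  choose m hm using hgen
  set M : ℕ := s.sup m with hM
  -- the rescaled element lies in V(R)
  have haVR : ∀ r : R, ((ι f) ^ (2 * M) * h) * τ (ι r) ∈ Set.range ι := by
    intro r
    have hr : r ∈ Algebra.adjoin k (s : Set R) := hs ▸ Algebra.mem_top
    induction hr using Algebra.adjoin_induction with
    | mem y hy =>
      rw [mul_assoc]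
      exact hmono (m y) (2 * M) _
        (le_trans (Finset.le_sup hy) (by omega)) (hm y)
    | algebraMap c =>
      have : (ι (algebraMap k R c) : K) = algebraMap k K c :=
        (IsScalarTower.algebraMap_apply k R K c).symm
      rw [this, Derivation.map_algebraMap, mul_zero]
      exact ⟨0, map_zero ι⟩
    | add x y hx hy ihx ihy =>
      rw [map_add, map_add, mul_add]
      exact hradd _ _ ihx ihy
    | mul x y hx hy ihx ihy =>
      rw [map_mul, Derivation.leibniz, smul_eq_mul, smul_eq_mul]
      have heq : (ι f) ^ (2 * M) * h * (ι x * τ (ι y) + ι y * τ (ι x)) =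
          ι x * ((ι f) ^ (2 * M) * h * τ (ι y)) +
          ι y * ((ι f) ^ (2 * M) * h * τ (ι x)) := by ring
      rw [heq]
      exact hradd _ _ (hrmul _ _ ⟨x, rfl⟩ ihy) (hrmul _ _ ⟨y, rfl⟩ ihx)
  have haVR' : ((ι f) ^ (2 * M) * h) ∈
      {a : K | ∀ r : R, (a • τ) (algebraMap R K r) ∈ Set.range (algebraMap R K)} := by
    intro r
    rw [Derivation.smul_apply, smul_eq_mul]
    exact haVR r
  obtain ⟨as, bs, has, hbs, heq⟩ := hwidth _ haVR'
  -- V(R) ⊆ V(Rf)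
  have hVRsub : ∀ a ∈
      {a : K | ∀ r : R, (a • τ) (algebraMap R K r) ∈ Set.range (algebraMap R K)},
      ∀ x ∈ Rf, (a • τ) x ∈ Rf := by
    intro a ha x hx
    rw [hRf] at hx ⊢
    induction hx using Algebra.adjoin_induction with
    | mem y hy =>
      rcases hy with hy | hy
      · obtain ⟨r, rfl⟩ := hy
        obtain ⟨r', hr'⟩ := ha r
        rw [← hr']
        exact Algebra.subset_adjoin (Or.inl ⟨r', rfl⟩)
      · rcases hy with rfl
        rw [Derivation.smul_apply, smul_eq_mul, Derivation.leibniz_inv]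
        have hfr : ((ι f)⁻¹ : K) ^ 2 ∈ Algebra.adjoin k
            (Set.range ⇑ι ∪ {(ι f)⁻¹}) := by
          rw [← hRf]
          exact Subalgebra.pow_mem Rf hfinvRf 2
        have haf := ha f
        rw [Derivation.smul_apply, smul_eq_mul] at haf
        obtain ⟨r', hr'⟩ := haf
        have hcoef : a * (-(ι f)⁻¹ ^ 2 • τ (ι f)) =
            -(((ι f)⁻¹ ^ 2) * (a * τ (ι f))) := by
          rw [smul_eq_mul]; ring
        rw [hcoef, ← hr']
        exact neg_mem (mul_mem hfr (Algebra.subset_adjoin (Or.inl ⟨r', rfl⟩)))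
    | algebraMap c =>
      rw [Derivation.smul_apply, Derivation.map_algebraMap, smul_zero]
      exact Subalgebra.zero_mem _
    | add x y hx hy ihx ihy =>
      rw [map_add]
      exact add_mem ihx ihy
    | mul x y hx hy ihx ihy =>
      rw [Derivation.smul_apply, Derivation.leibniz, smul_eq_mul, smul_eq_mul,
        smul_eq_mul]
      have heq2 : a * (x * τ y + y * τ x) = x * (a * τ y) + y * (a * τ x) := by ring
      rw [heq2]
      rw [Derivation.smul_apply, smul_eq_mul] at ihx ihy
      exact add_mem (mul_mem hx ihy) (mul_mem hy ihx)
  -- multiply by g⁻¹ stays in V(Rf)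
  set g : K := (ι f) ^ M with hg
  have hgne : g ≠ 0 := pow_ne_zero _ hιf
  have hginvRf : g⁻¹ ∈ Rf := by
    rw [hg, ← inv_pow]
    exact pow_mem hfinvRf M
  have hsc : ∀ a ∈
      {a : K | ∀ r : R, (a • τ) (algebraMap R K r) ∈ Set.range (algebraMap R K)},
      ∀ x ∈ Rf, ((g⁻¹ * a) • τ) x ∈ Rf := by
    intro a ha x hx
    rw [Derivation.smul_apply, smul_eq_mul, mul_assoc]
    have := hVRsub a ha x hx
    rw [Derivation.smul_apply, smul_eq_mul] at this
    exact mul_mem hginvRf this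
  refine ⟨fun i => g⁻¹ * as i, fun i => g⁻¹ * bs i, ?_, ?_, ?_⟩
  · intro i x hx
    exact hsc _ (has i) x hx
  · intro i x hx
    exact hsc _ (hbs i) x hx
  · have hsum : ∑ i, ⁅(g⁻¹ * as i) • τ, (g⁻¹ * bs i) • τ⁆ =
        (g⁻¹ * g⁻¹) • ∑ i, ⁅as i • τ, bs i • τ⁆ := by
      rw [Finset.smul_sum]
      exact Finset.sum_congr rfl fun i _ => stmt5_brk_smul τ g⁻¹ (as i) (bs i)
    rw [hsum, ← heq, smul_smul]
    have hp : (ι f : K) ^ M ≠ 0 := pow_ne_zero _ hιf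
    have hfin : g⁻¹ * g⁻¹ * ((ι f) ^ (2 * M) * h) = h := by
      rw [hg, two_mul, pow_add]
      field_simp
    rw [hfin]
end

section
/- Let k be a field, R a finitely generated k-algebra which is an integral domain, K its field of fractions with embedding ι : R → K, and τ a k-derivation of K. Define V(R) = { a ∈ K : for all r ∈ R, (a·τ)(ι(r)) ∈ ι(R) }. Let f ∈ R be nonzero, let R_f ⊆ K be the k-subalgebra of K generated by ι(R) and ι(f)⁻¹, and define V(R_f) = { a ∈ K : (a·τ)(R_f) ⊆ R_f }. Then V(R_f) = { g · ι(f)^{-2m} : g ∈ V(R), m ∈ ℕ }; in particular, every h ∈ V(R_f) can be written as h = g/ι(f)^{2m} for some g ∈ V(R) and some m ∈ ℕ. -/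
set_option synthInstance.maxHeartbeats 1000000
set_option maxHeartbeats 2000000

/-- The description `Vec(C_f) = R(C)[f⁻¹]·τ`, with every element of the form
`g / f^(2m)`, used in the proof of Theorem B. -/
theorem stmt_10 (k R K : Type*) [Field k] [CommRing R] [IsDomain R] [Algebra k R]
    [Algebra.FiniteType k R] [Field K] [Algebra R K] [IsFractionRing R K]
    [Algebra k K] [IsScalarTower k R K]
    (τ : Derivation k K K)
    (VR : Set K)
    (hVR : VR = {a : K | ∀ r : R,
      (a • τ) (algebraMap R K r) ∈ Set.range (algebraMap R K)})
    (f : R) (hf : f ≠ 0)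
    (Rf : Subalgebra k K)
    (hRf : Rf = Algebra.adjoin k
      (Set.range (algebraMap R K) ∪ {(algebraMap R K f)⁻¹}))
    (VRf : Set K)
    (hVRf : VRf = {a : K | ∀ x ∈ Rf, (a • τ) x ∈ Rf}) :
    VRf = {h : K | ∃ g ∈ VR, ∃ m : ℕ, h = g / (algebraMap R K f) ^ (2 * m)} := by
  set ι := algebraMap R K with hι
  have hinj : Function.Injective ι := IsFractionRing.injective R K
  have hF : ι f ≠ 0 := fun h => hf (hinj (h.trans (map_zero ι).symm))
  have hFpow : ∀ n : ℕ, (ι f) ^ n ≠ 0 := fun n => pow_ne_zero n hF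
  -- range ι ⊆ Rf and (ι f)⁻¹ ∈ Rf
  have hrange : ∀ r : R, ι r ∈ Rf := by
    intro r
    rw [hRf]
    exact Algebra.subset_adjoin (Or.inl ⟨r, rfl⟩)
  have hFinv : (ι f)⁻¹ ∈ Rf := by
    rw [hRf]
    exact Algebra.subset_adjoin (Or.inr rfl)
  -- Lemma B : ι s / (ι f)^n ∈ Rf
  have lemB : ∀ (s : R) (n : ℕ), ι s / (ι f) ^ n ∈ Rf := by
    intro s n
    have : ι s / (ι f) ^ n = ι s * ((ι f)⁻¹) ^ n := by
      rw [div_eq_mul_inv, inv_pow]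
    rw [this]
    exact mul_mem (hrange s) (pow_mem hFinv n)
  -- Lemma A : every element of Rf has the form ι s / (ι f)^n
  have lemA : ∀ x ∈ Rf, ∃ (s : R) (n : ℕ), x = ι s / (ι f) ^ n := by
    intro x hx
    rw [hRf] at hx
    induction hx using Algebra.adjoin_induction with
    | mem y hy =>
      rcases hy with ⟨r, rfl⟩ | hy
      · exact ⟨r, 0, by simp⟩
      · refine ⟨1, 1, ?_⟩
        simp only [Set.mem_singleton_iff] at hy
        rw [hy, map_one, pow_one, one_div]
    | algebraMap c =>
      refine ⟨algebraMap k R c, 0, ?_⟩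
      rw [pow_zero, div_one, ← IsScalarTower.algebraMap_apply]
    | add x y hx hy ihx ihy =>
      obtain ⟨s, n, rfl⟩ := ihx
      obtain ⟨t, p, rfl⟩ := ihy
      refine ⟨s * f ^ p + t * f ^ n, n + p, ?_⟩
      rw [div_add_div _ _ (hFpow n) (hFpow p), map_add, map_mul, map_mul, map_pow,
        map_pow, pow_add]
      ring
    | mul x y hx hy ihx ihy =>
      obtain ⟨s, n, rfl⟩ := ihx
      obtain ⟨t, p, rfl⟩ := ihy
      refine ⟨s * t, n + p, ?_⟩
      rw [div_mul_div_comm, ← pow_add, map_mul]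
  rw [hVRf, hVR]
  ext h
  simp only [Set.mem_setOf_eq]
  constructor
  · -- forward direction
    intro hh
    obtain ⟨s, hs⟩ := Algebra.FiniteType.out (R := k) (A := R)
    -- for each generator, some power of ι f clears denominators
    have key : ∀ x : s, ∃ n : ℕ, (ι f) ^ n * (h * τ (ι x)) ∈ Set.range ι := by
      rintro ⟨x, hx⟩
      obtain ⟨r, n, hrn⟩ := lemA _ (hh (ι x) (hrange x))
      refine ⟨n, ?_⟩
      have : (h • τ) (ι x) = h * τ (ι x) := rfl
      rw [this] at hrn
      rw [hrn]
      exact ⟨r, by field_simp⟩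
    choose nf hnf using key
    classical
    set N := s.attach.sup nf with hN
    -- monotonicity of clearing denominators
    have mono : ∀ (y : K) (n p : ℕ), n ≤ p → (ι f) ^ n * y ∈ Set.range ι →
        (ι f) ^ p * y ∈ Set.range ι := by
      rintro y n p hnp ⟨r, hr⟩
      refine ⟨f ^ (p - n) * r, ?_⟩
      rw [map_mul, map_pow, hr, ← mul_assoc, ← pow_add]
      congr 2
      omega
    refine ⟨(ι f) ^ (2 * N) * h, ?_, N, ?_⟩
    · -- (ι f)^(2N) * h ∈ VR
      intro r
      have hr : r ∈ Algebra.adjoin k (s : Set R) := hs ▸ Algebra.mem_top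
      have : ∀ r ∈ Algebra.adjoin k (s : Set R),
          (ι f) ^ (2 * N) * (h * τ (ι r)) ∈ Set.range ι := by
        intro r hr
        induction hr using Algebra.adjoin_induction with
        | mem x hx =>
          exact mono _ _ _ (le_trans (Finset.le_sup (Finset.mem_attach s ⟨x, hx⟩))
            (by omega)) (hnf ⟨x, hx⟩)
        | algebraMap c =>
          have : ι (algebraMap k R c) = algebraMap k K c :=
            (IsScalarTower.algebraMap_apply k R K c).symm
          rw [this, τ.map_algebraMap]
          exact ⟨0, by simp⟩
        | add x y hx hy ihx ihy =>
          obtain ⟨a, ha⟩ := ihx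
          obtain ⟨b, hb⟩ := ihy
          refine ⟨a + b, ?_⟩
          rw [map_add, ha, hb, map_add, map_add, mul_add, mul_add]
        | mul x y hx hy ihx ihy =>
          obtain ⟨a, ha⟩ := ihx
          obtain ⟨b, hb⟩ := ihy
          refine ⟨x * b + y * a, ?_⟩
          rw [map_add, map_mul, map_mul, ha, hb, map_mul, Derivation.leibniz]
          simp only [smul_eq_mul]
          ring
      have := this r hr
      show (ι f) ^ (2 * N) * h * τ (ι r) ∈ Set.range ι
      rwa [mul_assoc]
    · field_simp
  · -- reverse direction
    rintro ⟨g, hg, m, rfl⟩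
    intro x hx
    -- prove membership together with containment in Rf by adjoin induction
    suffices H : ∀ x ∈ Rf, x ∈ Rf ∧ (g / ι f ^ (2 * m)) * τ x ∈ Rf from (H x hx).2
    intro x hx
    rw [hRf] at hx
    induction hx using Algebra.adjoin_induction with
    | mem y hy =>
      rcases hy with ⟨r, rfl⟩ | hy
      · refine ⟨hrange r, ?_⟩
        obtain ⟨t, ht⟩ := hg r
        have ht' : g * τ (ι r) = ι t := ht.symm
        have : g / ι f ^ (2 * m) * τ (ι r) = ι t / ι f ^ (2 * m) := by
          rw [div_mul_eq_mul_div, ht']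
        rw [this]
        exact lemB t (2 * m)
      · simp only [Set.mem_singleton_iff] at hy
        subst hy
        refine ⟨hFinv, ?_⟩
        obtain ⟨t, ht⟩ := hg f
        have ht' : g * τ (ι f) = ι t := ht.symm
        have : g / ι f ^ (2 * m) * τ ((ι f)⁻¹) = -(ι t) / ι f ^ (2 * m + 2) := by
          rw [Derivation.leibniz_inv]
          rw [smul_eq_mul]
          field_simp
          rw [show g * τ (ι f) * ι f ^ (2*m+2) = (g * τ (ι f)) * ι f ^ (2*m+2) by ring,
            ht']
          ring
        rw [this, neg_div]
        exact neg_mem (lemB t (2 * m + 2))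
    | algebraMap c =>
      refine ⟨Subalgebra.algebraMap_mem Rf c, ?_⟩
      rw [τ.map_algebraMap, mul_zero]
      exact Subalgebra.zero_mem Rf
    | add x y hx hy ihx ihy =>
      refine ⟨add_mem ihx.1 ihy.1, ?_⟩
      rw [map_add, mul_add]
      exact add_mem ihx.2 ihy.2
    | mul x y hx hy ihx ihy =>
      refine ⟨mul_mem ihx.1 ihy.1, ?_⟩
      rw [Derivation.leibniz, smul_eq_mul, smul_eq_mul, mul_add]
      rw [show g / ι f ^ (2*m) * (x * τ y) = x * (g / ι f ^ (2*m) * τ y) by ring,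
        show g / ι f ^ (2*m) * (y * τ x) = y * (g / ι f ^ (2*m) * τ x) by ring]
      exact add_mem (mul_mem ihx.1 ihy.2) (mul_mem ihy.1 ihx.2)
end
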